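/- Let U ⊆ ℝ² be open and let f = (x,y,z,p,q) : U → ℝ⁵ be a smooth map satisfying the contact condition on U and the Hess = 0 condition on U (Jac(p,q) = 0 on U). Then for every a ∈ U, the derivative at a of π₂∘f = (p, q, p·x + q·y − z) : U → ℝ³ has rank at most 1, and if moreover the total derivative Df(a) : ℝ² → ℝ⁵ is injective, then the derivative at a of π₁∘f = (x,y,z) : U → ℝ³ has rank at least 1 (rank meaning the finite dimension of the range of the continuous linear map). -/

import Mathlib

noncomputable section

/-- Partial derivative in the direction `(1,0)`. -/
def pu (g : ℝ × ℝ → ℝ) (a : ℝ × ℝ) : ℝ := fderiv ℝ g a (1, 0)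

/-- Partial derivative in the direction `(0,1)`. -/
def pv (g : ℝ × ℝ → ℝ) (a : ℝ × ℝ) : ℝ := fderiv ℝ g a (0, 1)

/-- Jacobian determinant `g_u h_v - g_v h_u`. -/
def Jac (g h : ℝ × ℝ → ℝ) (a : ℝ × ℝ) : ℝ := pu g a * pv h a - pv g a * pu h a

/-- Two pairs of reals with vanishing determinant admit a nontrivial linear relation. -/
lemma aux_dep (A B C D : ℝ) (h : A * D - B * C = 0) :
    ∃ c d : ℝ, ¬(c = 0 ∧ d = 0) ∧ c * A + d * B = 0 ∧ c * C + d * D = 0 := by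
  by_cases h1 : C = 0 ∧ D = 0
  · by_cases h2 : A = 0 ∧ B = 0
    · exact ⟨1, 0, by simp, by rw [h2.1, h2.2]; ring, by rw [h1.1, h1.2]; ring⟩
    · exact ⟨B, -A, by rintro ⟨hB, hA⟩; exact h2 ⟨by linarith, hB⟩,
        by ring, by rw [h1.1, h1.2]; ring⟩
  · exact ⟨D, -C, by rintro ⟨hD, hC⟩; exact h1 ⟨by linarith, hD⟩,
      by linear_combination h, by ring⟩

lemma span_singleton_finrank_le (v : ℝ × ℝ × ℝ) :
    Module.finrank ℝ (Submodule.span ℝ ({v} : Set (ℝ × ℝ × ℝ))) ≤ 1 := by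
  by_cases hv : v = 0
  · rw [hv, Submodule.span_zero_singleton]; simp
  · exact le_of_eq (finrank_span_singleton hv)

/-- The span of two linearly dependent vectors has dimension at most one. -/
lemma aux_span (v1 v2 : ℝ × ℝ × ℝ) (c d : ℝ) (hcd : ¬(c = 0 ∧ d = 0))
    (h : c • v1 + d • v2 = 0) :
    Module.finrank ℝ (Submodule.span ℝ ({v1, v2} : Set (ℝ × ℝ × ℝ))) ≤ 1 := by
  by_cases hc : c = 0
  · have hd : d ≠ 0 := fun hd => hcd ⟨hc, hd⟩
    have hv2 : v2 = 0 := by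
      have : d • v2 = 0 := by rw [hc] at h; simpa using h
      simpa [hd] using this
    calc Module.finrank ℝ (Submodule.span ℝ ({v1, v2} : Set (ℝ × ℝ × ℝ)))
        ≤ Module.finrank ℝ (Submodule.span ℝ ({v1} : Set (ℝ × ℝ × ℝ))) := by
          apply Submodule.finrank_mono
          apply Submodule.span_le.2
          rintro w (rfl | rfl)
          · exact Submodule.subset_span rfl
          · rw [hv2]; exact zero_mem _
      _ ≤ 1 := span_singleton_finrank_le v1
  · have hv1 : v1 = (-d / c) • v2 := by
      have h' : c • v1 = (-d) • v2 := by
        rw [neg_smul]; linear_combination (norm := module) h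
      have := congrArg (fun w => c⁻¹ • w) h'
      simpa [smul_smul, inv_mul_cancel₀ hc, div_eq_inv_mul, mul_comm] using this
    calc Module.finrank ℝ (Submodule.span ℝ ({v1, v2} : Set (ℝ × ℝ × ℝ)))
        ≤ Module.finrank ℝ (Submodule.span ℝ ({v2} : Set (ℝ × ℝ × ℝ))) := by
          apply Submodule.finrank_mono
          apply Submodule.span_le.2
          rintro w (rfl | rfl)
          · rw [hv1]
            exact Submodule.smul_mem _ _ (Submodule.subset_span rfl)
          · exact Submodule.subset_span rfl
      _ ≤ 1 := span_singleton_finrank_le v2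

/-- The range of a continuous linear map from `ℝ²` is spanned by the images of the
standard basis vectors. -/
lemma range_clm {V : Type*} [NormedAddCommGroup V] [NormedSpace ℝ V]
    (L : (ℝ × ℝ) →L[ℝ] V) :
    LinearMap.range (L : (ℝ × ℝ) →ₗ[ℝ] V) = Submodule.span ℝ ({L (1, 0), L (0, 1)} : Set V) := by
  apply le_antisymm
  · rintro w ⟨⟨u, v⟩, rfl⟩
    have hv : ((u, v) : ℝ × ℝ) = u • ((1 : ℝ), (0 : ℝ)) + v • ((0 : ℝ), (1 : ℝ)) := by
      simp [Prod.ext_iff]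
    rw [hv, map_add, map_smul, map_smul]
    exact add_mem (Submodule.smul_mem _ _ (Submodule.subset_span (by simp)))
      (Submodule.smul_mem _ _ (Submodule.subset_span (by simp)))
  · apply Submodule.span_le.2
    rintro w (rfl | rfl)
    · exact ⟨(1, 0), rfl⟩
    · exact ⟨(0, 1), rfl⟩

/-- For a geometric solution to Hess = 0 (a developable surface), the dual projection
`π₂ ∘ f` has rank at most 1 everywhere, and, where `f` is immersive, the projection
`π₁ ∘ f` has rank at least 1. -/
theorem stmt10 (U : Set (ℝ × ℝ)) (hU : IsOpen U)
    (x y z p q : ℝ × ℝ → ℝ)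
    (hx : ContDiffOn ℝ (⊤ : ℕ∞) x U) (hy : ContDiffOn ℝ (⊤ : ℕ∞) y U)
    (hz : ContDiffOn ℝ (⊤ : ℕ∞) z U) (hp : ContDiffOn ℝ (⊤ : ℕ∞) p U)
    (hq : ContDiffOn ℝ (⊤ : ℕ∞) q U)
    (hcontact : ∀ a ∈ U, pu z a = p a * pu x a + q a * pu y a ∧
      pv z a = p a * pv x a + q a * pv y a)
    (hhess : ∀ a ∈ U, Jac p q a = 0) :
    ∀ a ∈ U,
      Module.finrank ℝ (LinearMap.range
        (fderiv ℝ (fun b => (p b, q b, p b * x b + q b * y b - z b)) a : ℝ × ℝ →ₗ[ℝ] ℝ × ℝ × ℝ)) ≤ 1 ∧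
      (Function.Injective (fderiv ℝ (fun b => (x b, y b, z b, p b, q b)) a) →
        1 ≤ Module.finrank ℝ (LinearMap.range
          (fderiv ℝ (fun b => (x b, y b, z b)) a : ℝ × ℝ →ₗ[ℝ] ℝ × ℝ × ℝ))) := by
  intro a ha
  have hmem : U ∈ nhds a := hU.mem_nhds ha
  have dx : DifferentiableAt ℝ x a := (hx.contDiffAt hmem).differentiableAt (by simp)
  have dy : DifferentiableAt ℝ y a := (hy.contDiffAt hmem).differentiableAt (by simp)
  have dz : DifferentiableAt ℝ z a := (hz.contDiffAt hmem).differentiableAt (by simp)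
  have dp : DifferentiableAt ℝ p a := (hp.contDiffAt hmem).differentiableAt (by simp)
  have dq : DifferentiableAt ℝ q a := (hq.contDiffAt hmem).differentiableAt (by simp)
  set Dx := fderiv ℝ x a with hDx
  set Dy := fderiv ℝ y a with hDy
  set Dz := fderiv ℝ z a with hDz
  set Dp := fderiv ℝ p a with hDp
  set Dq := fderiv ℝ q a with hDq
  have hx' : HasFDerivAt x Dx a := dx.hasFDerivAt
  have hy' : HasFDerivAt y Dy a := dy.hasFDerivAt
  have hz' : HasFDerivAt z Dz a := dz.hasFDerivAt
  have hp' : HasFDerivAt p Dp a := dp.hasFDerivAt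
  have hq' : HasFDerivAt q Dq a := dq.hasFDerivAt
  -- the scalars
  have hc := hcontact a ha
  have hh : Dp (1,0) * Dq (0,1) - Dp (0,1) * Dq (1,0) = 0 := hhess a ha
  obtain ⟨c, d, hcd, hrel1, hrel2⟩ := aux_dep (Dp (1,0)) (Dp (0,1)) (Dq (1,0)) (Dq (0,1)) hh
  have hvec : ((c, d) : ℝ × ℝ) = c • ((1:ℝ), (0:ℝ)) + d • ((0:ℝ), (1:ℝ)) := by
    simp [Prod.ext_iff]
  have hcd0 : ((c, d) : ℝ × ℝ) ≠ 0 := by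
    simp only [Prod.ext_iff, ne_eq, Prod.fst_zero, Prod.snd_zero]
    tauto
  constructor
  · -- rank of π₂ ∘ f ≤ 1
    have hw : HasFDerivAt (fun b => p b * x b + q b * y b - z b)
        ((p a • Dx + x a • Dp + (q a • Dy + y a • Dq)) - Dz) a :=
      ((hp'.mul hx').add (hq'.mul hy')).sub hz'
    have hπ : HasFDerivAt (fun b => (p b, q b, p b * x b + q b * y b - z b))
        (Dp.prod (Dq.prod ((p a • Dx + x a • Dp + (q a • Dy + y a • Dq)) - Dz))) a :=
      hp'.prodMk (hq'.prodMk hw)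
    rw [hπ.fderiv, range_clm]
    apply aux_span _ _ c d hcd
    have e1 : Dz (1, 0) = p a * Dx (1, 0) + q a * Dy (1, 0) := hc.1
    have e2 : Dz (0, 1) = p a * Dx (0, 1) + q a * Dy (0, 1) := hc.2
    have happ1 : (Dp.prod (Dq.prod ((p a • Dx + x a • Dp + (q a • Dy + y a • Dq)) - Dz))) (1, 0)
        = (Dp (1, 0), Dq (1, 0),
          p a * Dx (1, 0) + x a * Dp (1, 0) + (q a * Dy (1, 0) + y a * Dq (1, 0)) - Dz (1, 0)) :=
      rfl
    have happ2 : (Dp.prod (Dq.prod ((p a • Dx + x a • Dp + (q a • Dy + y a • Dq)) - Dz))) (0, 1)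
        = (Dp (0, 1), Dq (0, 1),
          p a * Dx (0, 1) + x a * Dp (0, 1) + (q a * Dy (0, 1) + y a * Dq (0, 1)) - Dz (0, 1)) :=
      rfl
    rw [happ1, happ2]
    simp only [Prod.smul_mk, Prod.mk_add_mk, smul_eq_mul]
    rw [show (0 : ℝ × ℝ × ℝ) = (0, 0, 0) from rfl, Prod.mk.injEq, Prod.mk.injEq]
    refine ⟨hrel1, hrel2, ?_⟩
    linear_combination (-c) * e1 + (-d) * e2 + x a * hrel1 + y a * hrel2
  · -- rank of π₁ ∘ f ≥ 1
    intro hinj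
    have hπ5 : HasFDerivAt (fun b => (x b, y b, z b, p b, q b))
        (Dx.prod (Dy.prod (Dz.prod (Dp.prod Dq)))) a :=
      hx'.prodMk (hy'.prodMk (hz'.prodMk (hp'.prodMk hq')))
    have hπ3 : HasFDerivAt (fun b => (x b, y b, z b)) (Dx.prod (Dy.prod Dz)) a :=
      hx'.prodMk (hy'.prodMk hz')
    rw [hπ3.fderiv]
    have hL5 : (Dx.prod (Dy.prod (Dz.prod (Dp.prod Dq)))) (c, d) ≠ 0 := by
      intro h0
      rw [hπ5.fderiv] at hinj
      exact hcd0 (hinj (by rw [h0, map_zero]))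
    have hne : (Dx.prod (Dy.prod Dz)) (c, d) ≠ 0 := by
      intro h0
      apply hL5
      have hp0 : Dp (c, d) = 0 := by
        rw [hvec, map_add, map_smul, map_smul]; simpa using hrel1
      have hq0 : Dq (c, d) = 0 := by
        rw [hvec, map_add, map_smul, map_smul]; simpa using hrel2
      simp only [ContinuousLinearMap.prod_apply, Prod.mk_eq_zero] at h0 ⊢
      exact ⟨h0.1, h0.2.1, h0.2.2, hp0, hq0⟩
    have hne' : LinearMap.range (Dx.prod (Dy.prod Dz) : ℝ × ℝ →ₗ[ℝ] ℝ × ℝ × ℝ) ≠ ⊥ := by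
      rw [Submodule.ne_bot_iff]
      exact ⟨(Dx.prod (Dy.prod Dz)) (c, d), LinearMap.mem_range_self _ _, hne⟩
    rw [Nat.one_le_iff_ne_zero]
    intro h0
    exact hne' (Submodule.finrank_eq_zero.mp h0)
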